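/- Let (S, o) be a twisted gyrogroup. Then f(x, y)⁻¹ = f(y, x) for all x, y ∈ S. -/

import Mathlib

/-- A right loop: identity `e` and bijective right translations. -/
structure RightLoop (S : Type*) where
  op : S → S → S
  e : S
  op_e : ∀ x, op x e = x
  e_op : ∀ x, op e x = x
  bij : ∀ a, Function.Bijective (fun x => op x a)

/-- The inner mapping group: the subgroup of `Equiv.Perm S` generated by the
right inner mappings `f y z`. -/
def innerGroup {S : Type*} (f : S → S → Equiv.Perm S) : Subgroup (Equiv.Perm S) :=
  Subgroup.closure (Set.range (fun p : S × S => f p.1 p.2))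

/-!
From `f(y', y) = id` the left inverse `y'` is a two-sided inverse that cancels on the right, and
the defining identity of `f` then gives `f(x, y)⁻¹ = f(x ∘ y, y')`, which the right loop property
turns into `f(x, y)⁻¹ = f(x ∘ y, x)`. Left translations are surjective:
`x ∘ ((y ∘ (x ∘ y)') ∘ y) = y`. Writing `y = x ∘ b`, the right loop property gives
`f(x, y) = f(x, b)`, whose inverse is `f(x ∘ b, x) = f(y, x)`.
-/

namespace RightLoop

variable {S : Type*} (L : RightLoop S) {inv : S → S} {f : S → S → Equiv.Perm S}

theorem op_right_cancel {a b : S} (c : S) (h : L.op a c = L.op b c) : a = b :=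
  (L.bij c).1 h

theorem op_inv_op (hinv : ∀ x, L.op (inv x) x = L.e)
    (hf : ∀ y z x, L.op (f y z x) (L.op y z) = L.op (L.op x y) z)
    (hff : ∀ y, f (inv y) y = 1) (p a : S) :
    L.op (L.op p (inv a)) a = p := by
  simpa [hff a, hinv a, L.op_e] using (hf (inv a) a p).symm

theorem op_op_inv (hinv : ∀ x, L.op (inv x) x = L.e)
    (hf : ∀ y z x, L.op (f y z x) (L.op y z) = L.op (L.op x y) z)
    (hff : ∀ y, f (inv y) y = 1) (p a : S) :
    L.op (L.op p a) (inv a) = p :=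
  L.op_right_cancel a (L.op_inv_op hinv hf hff (L.op p a) a)

theorem op_inv_self (hinv : ∀ x, L.op (inv x) x = L.e)
    (hf : ∀ y z x, L.op (f y z x) (L.op y z) = L.op (L.op x y) z)
    (hff : ∀ y, f (inv y) y = 1) (a : S) :
    L.op a (inv a) = L.e := by
  simpa [L.e_op] using L.op_op_inv hinv hf hff L.e a

theorem inv_inner_eq_inner_op_inv (hinv : ∀ x, L.op (inv x) x = L.e)
    (hf : ∀ y z x, L.op (f y z x) (L.op y z) = L.op (L.op x y) z)
    (hff : ∀ y, f (inv y) y = 1) (x y : S) :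
    (f x y)⁻¹ = f (L.op x y) (inv y) := by
  refine inv_eq_of_mul_eq_one_left (Equiv.ext fun m => L.op_right_cancel x ?_)
  calc L.op (f (L.op x y) (inv y) (f x y m)) x
      = L.op (f (L.op x y) (inv y) (f x y m)) (L.op (L.op x y) (inv y)) := by
        rw [L.op_op_inv hinv hf hff]
    _ = L.op (L.op (L.op m x) y) (inv y) := by rw [hf, hf]
    _ = L.op m x := L.op_op_inv hinv hf hff _ _

theorem inv_inner_eq_inner_op_left (hinv : ∀ x, L.op (inv x) x = L.e)
    (hf : ∀ y z x, L.op (f y z x) (L.op y z) = L.op (L.op x y) z)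
    (hff : ∀ y, f (inv y) y = 1) (hrlp : ∀ x y, f x y = f x (L.op x y)) (x y : S) :
    (f x y)⁻¹ = f (L.op x y) x := by
  rw [L.inv_inner_eq_inner_op_inv hinv hf hff, hrlp, L.op_op_inv hinv hf hff]

theorem op_op_op_inv_op (hinv : ∀ x, L.op (inv x) x = L.e)
    (hf : ∀ y z x, L.op (f y z x) (L.op y z) = L.op (L.op x y) z)
    (hff : ∀ y, f (inv y) y = 1) (hrlp : ∀ x y, f x y = f x (L.op x y)) (p y v : S) :
    L.op p (L.op (L.op y v) y) = L.op (L.op (L.op p y) v) y := by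
  set t := L.op y v
  have ht : L.op t (inv v) = y := L.op_op_inv hinv hf hff y v
  have hft : f t (inv v) = f t y := by rw [hrlp, ht]
  obtain ⟨m, rfl⟩ := (f t y).surjective p
  have hmt : L.op m t = L.op (L.op (f t y m) y) v := by
    calc L.op m t = L.op (L.op (L.op m t) (inv v)) v := (L.op_inv_op hinv hf hff _ _).symm
      _ = L.op (L.op (f t (inv v) m) (L.op t (inv v))) v := by rw [hf]
      _ = L.op (L.op (f t y m) y) v := by rw [hft, ht]
  rw [hf, hmt]

theorem exists_op_eq (hinv : ∀ x, L.op (inv x) x = L.e)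
    (hf : ∀ y z x, L.op (f y z x) (L.op y z) = L.op (L.op x y) z)
    (hff : ∀ y, f (inv y) y = 1) (hrlp : ∀ x y, f x y = f x (L.op x y)) (x y : S) :
    ∃ b, L.op x b = y :=
  ⟨L.op (L.op y (inv (L.op x y))) y, by
    rw [L.op_op_op_inv_op hinv hf hff hrlp, L.op_inv_self hinv hf hff, L.e_op]⟩

end RightLoop

theorem twisted_gyrogroup_f_inv_general {S : Type*} (L : RightLoop S)
    (inv : S → S) (hinv : ∀ x, L.op (inv x) x = L.e)
    (f : S → S → Equiv.Perm S)
    (hf : ∀ y z x, L.op (f y z x) (L.op y z) = L.op (L.op x y) z)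
    (hff : ∀ y, f (inv y) y = 1)
    (hrlp : ∀ x y, f x y = f x (L.op x y)) :
    ∀ x y : S, (f x y)⁻¹ = f y x := by
  intro x y
  obtain ⟨b, rfl⟩ := L.exists_op_eq hinv hf hff hrlp x y
  rw [← hrlp, L.inv_inner_eq_inner_op_left hinv hf hff hrlp]

/-- In a twisted gyrogroup, `f(x,y)⁻¹ = f(y,x)`. -/
theorem twisted_gyrogroup_f_inv {S : Type*} (L : RightLoop S)
    (inv : S → S) (hinv : ∀ x, L.op (inv x) x = L.e)
    (f : S → S → Equiv.Perm S)
    (hf : ∀ y z x, L.op (f y z x) (L.op y z) = L.op (L.op x y) z)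
    (hff : ∀ y, f (inv y) y = 1)
    (htw : ∀ y z x w, w ≠ L.e →
      f y z (L.op x w) = L.op (inv (f y z (inv x))) (f y z w))
    (hrlp : ∀ x y, f x y = f x (L.op x y)) :
    ∀ x y : S, (f x y)⁻¹ = f y x :=
  twisted_gyrogroup_f_inv_general L inv hinv f hf hff hrlp
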